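/- r-Normality Lemma: for every arrow term f of M≤ there exist a developed r-less arrow term f' and an r-factorized arrow term f_r (of suitable types) such that f = f_r ∘ f' in M≤. -/
import Mathlib


/-! Formalization of categories of proofs for linear equality (Dosen-Petric),
with the generality functor G into the category Br of Brauerian diagrams,
represented here by the matching relation on occurrences of variables. -/

namespace DP

/-- Formulae: atomic formulae `x R y` (for the binary predicate in question),
the constant true, and conjunctions. -/
inductive Fm (V : Type) : Type
  | rel : V → V → Fm V
  | top : Fm V
  | and : Fm V → Fm V → Fm V

/-- Occurrences of variables in a formula: `false`/`true` are respectively the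
left-hand and right-hand occurrences of variables in an atomic formula. -/
def Occ {V : Type} : Fm V → Type
  | .rel _ _ => Bool
  | .top => Empty
  | .and A B => Occ A ⊕ Occ B

/-- The matching relation on `source ⊕ target` induced by a relabelling function
from target occurrences to source occurrences. -/
def relabel {α β : Type} (φ : β → α) : α ⊕ β → α ⊕ β → Prop :=
  fun u v => (∃ o, u = Sum.inl (φ o) ∧ v = Sum.inr o) ∨
             (∃ o, u = Sum.inr o ∧ v = Sum.inl (φ o))

/-- The matching relation induced by a relabelling function from source occurrences
to target occurrences. -/
def corelabel {α β : Type} (ψ : α → β) : α ⊕ β → α ⊕ β → Prop :=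
  fun u v => (∃ o, u = Sum.inl o ∧ v = Sum.inr (ψ o)) ∨
             (∃ o, u = Sum.inr (ψ o) ∧ v = Sum.inl o)

/-- Horizontal (side-by-side) composition of Brauerian diagrams. -/
def tensRel {α β γ δ : Type}
    (p : α ⊕ β → α ⊕ β → Prop) (q : γ ⊕ δ → γ ⊕ δ → Prop) :
    (α ⊕ γ) ⊕ (β ⊕ δ) → (α ⊕ γ) ⊕ (β ⊕ δ) → Prop :=
  fun u v =>
    (∃ x y, p x y ∧ u = Sum.map Sum.inl Sum.inl x ∧ v = Sum.map Sum.inl Sum.inl y) ∨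
    (∃ x y, q x y ∧ u = Sum.map Sum.inr Sum.inr x ∧ v = Sum.map Sum.inr Sum.inr y)

/-- Vertical composition of Brauerian diagrams: two endpoints are matched in the
composite when they are joined by a path of edges through the middle points. -/
def compRel {α β γ : Type}
    (p : α ⊕ β → α ⊕ β → Prop) (q : β ⊕ γ → β ⊕ γ → Prop) :
    α ⊕ γ → α ⊕ γ → Prop :=
  fun u v => u ≠ v ∧
    Relation.ReflTransGen
      (fun s t : α ⊕ β ⊕ γ =>
        (∃ x y, p x y ∧ s = Sum.map (fun a => a) Sum.inl x ∧
                        t = Sum.map (fun a => a) Sum.inl y) ∨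
        (∃ x y, q x y ∧ s = Sum.inr x ∧ t = Sum.inr y))
      (Sum.map (fun a => a) Sum.inr u) (Sum.map (fun a => a) Sum.inr v)

/-- Arrow terms. -/
inductive Ar (V : Type) : Fm V → Fm V → Type
  | id (A : Fm V) : Ar V A A
  | comp {A B C : Fm V} : Ar V B C → Ar V A B → Ar V A C
  | tens {A B C D : Fm V} : Ar V A B → Ar V C D → Ar V (.and A C) (.and B D)
  | bto (A B C : Fm V) : Ar V (.and A (.and B C)) (.and (.and A B) C)
  | bfrom (A B C : Fm V) : Ar V (.and (.and A B) C) (.and A (.and B C))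
  | dto (A : Fm V) : Ar V (.and A .top) A
  | dfrom (A : Fm V) : Ar V A (.and A .top)
  | sto (A : Fm V) : Ar V (.and .top A) A
  | sfrom (A : Fm V) : Ar V A (.and .top A)
  | r (x : V) : Ar V .top (.rel x x)
  | t (x y z : V) : Ar V (.and (.rel x y) (.rel y z)) (.rel x z)

/-- The Brauerian diagram (matching relation on occurrences of variables in
source and target) associated with an arrow term: the image under the functor G. -/
def GRel {V : Type} : ∀ {A B : Fm V}, Ar V A B → (Occ A ⊕ Occ B → Occ A ⊕ Occ B → Prop)
  | _, _, .id _ => relabel (fun o => o)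
  | _, _, .comp g f => compRel (GRel f) (GRel g)
  | _, _, .tens f g => tensRel (GRel f) (GRel g)
  | _, _, .bto _ _ _ => relabel (fun o =>
      match o with
      | Sum.inl (Sum.inl a) => Sum.inl a
      | Sum.inl (Sum.inr b) => Sum.inr (Sum.inl b)
      | Sum.inr c => Sum.inr (Sum.inr c))
  | _, _, .bfrom _ _ _ => relabel (fun o =>
      match o with
      | Sum.inl a => Sum.inl (Sum.inl a)
      | Sum.inr (Sum.inl b) => Sum.inl (Sum.inr b)
      | Sum.inr (Sum.inr c) => Sum.inr c)
  | _, _, .dto _ => relabel Sum.inl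
  | _, _, .dfrom _ => corelabel Sum.inl
  | _, _, .sto _ => relabel Sum.inr
  | _, _, .sfrom _ => corelabel Sum.inr
  | _, _, .r _ => fun u v =>
      (u = Sum.inr false ∧ v = Sum.inr true) ∨ (u = Sum.inr true ∧ v = Sum.inr false)
  | _, _, .t _ _ _ => fun u v =>
      (u = Sum.inl (Sum.inl false) ∧ v = Sum.inr false) ∨
      (u = Sum.inr false ∧ v = Sum.inl (Sum.inl false)) ∨
      (u = Sum.inl (Sum.inr true) ∧ v = Sum.inr true) ∨
      (u = Sum.inr true ∧ v = Sum.inl (Sum.inr true)) ∨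
      (u = Sum.inl (Sum.inl true) ∧ v = Sum.inl (Sum.inr false)) ∨
      (u = Sum.inl (Sum.inr false) ∧ v = Sum.inl (Sum.inl true))

/-- Equality of arrow terms: the smallest congruence generated by the defining
equations of the category. -/
inductive Eqv {V : Type} : ∀ {A B : Fm V}, Ar V A B → Ar V A B → Prop
  | refl {A B : Fm V} (f : Ar V A B) : Eqv f f
  | symm {A B : Fm V} {f g : Ar V A B} : Eqv f g → Eqv g f
  | trans {A B : Fm V} {f g h : Ar V A B} : Eqv f g → Eqv g h → Eqv f h
  | congr_comp {A B C : Fm V} {g g' : Ar V B C} {f f' : Ar V A B} :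
      Eqv g g' → Eqv f f' → Eqv (g.comp f) (g'.comp f')
  | congr_tens {A B C D : Fm V} {f f' : Ar V A B} {g g' : Ar V C D} :
      Eqv f f' → Eqv g g' → Eqv (f.tens g) (f'.tens g')
  | id_comp {A B : Fm V} (f : Ar V A B) : Eqv ((Ar.id B).comp f) f
  | comp_id {A B : Fm V} (f : Ar V A B) : Eqv (f.comp (Ar.id A)) f
  | comp_assoc {A B C D : Fm V} (h : Ar V C D) (g : Ar V B C) (f : Ar V A B) :
      Eqv ((h.comp g).comp f) (h.comp (g.comp f))
  | tens_id (A B : Fm V) : Eqv ((Ar.id A).tens (Ar.id B)) (Ar.id (.and A B))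
  | tens_comp {A1 B1 C1 A2 B2 C2 : Fm V} (g1 : Ar V B1 C1) (f1 : Ar V A1 B1)
      (g2 : Ar V B2 C2) (f2 : Ar V A2 B2) :
      Eqv ((g1.comp f1).tens (g2.comp f2)) ((g1.tens g2).comp (f1.tens f2))
  | nat_b {A B C D E F : Fm V} (f : Ar V A D) (g : Ar V B E) (h : Ar V C F) :
      Eqv (((f.tens g).tens h).comp (Ar.bto A B C)) ((Ar.bto D E F).comp (f.tens (g.tens h)))
  | nat_d {A D : Fm V} (f : Ar V A D) :
      Eqv (f.comp (Ar.dto A)) ((Ar.dto D).comp (f.tens (Ar.id .top)))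
  | nat_s {A D : Fm V} (f : Ar V A D) :
      Eqv (f.comp (Ar.sto A)) ((Ar.sto D).comp ((Ar.id .top).tens f))
  | bb1 (A B C : Fm V) : Eqv ((Ar.bfrom A B C).comp (Ar.bto A B C)) (Ar.id (.and A (.and B C)))
  | bb2 (A B C : Fm V) : Eqv ((Ar.bto A B C).comp (Ar.bfrom A B C)) (Ar.id (.and (.and A B) C))
  | dd1 (A : Fm V) : Eqv ((Ar.dfrom A).comp (Ar.dto A)) (Ar.id (.and A .top))
  | dd2 (A : Fm V) : Eqv ((Ar.dto A).comp (Ar.dfrom A)) (Ar.id A)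
  | ss1 (A : Fm V) : Eqv ((Ar.sfrom A).comp (Ar.sto A)) (Ar.id (.and .top A))
  | ss2 (A : Fm V) : Eqv ((Ar.sto A).comp (Ar.sfrom A)) (Ar.id A)
  | pent (A B C D : Fm V) :
      Eqv ((Ar.bto (.and A B) C D).comp (Ar.bto A B (.and C D)))
        (((Ar.bto A B C).tens (Ar.id D)).comp
          ((Ar.bto A (.and B C) D).comp ((Ar.id A).tens (Ar.bto B C D))))
  | bds (A C : Fm V) :
      Eqv (Ar.bto A .top C) (((Ar.dfrom A).tens (Ar.id C)).comp ((Ar.id A).tens (Ar.sto C)))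
  | rtd (x y : V) :
      Eqv ((Ar.t x y y).comp ((Ar.id (.rel x y)).tens (Ar.r y))) (Ar.dto (.rel x y))
  | rts (x y : V) :
      Eqv ((Ar.t y y x).comp ((Ar.r y).tens (Ar.id (.rel y x)))) (Ar.sto (.rel y x))
  | tb (x y z u : V) :
      Eqv ((Ar.t x y u).comp ((Ar.id (.rel x y)).tens (Ar.t y z u)))
        ((Ar.t x z u).comp (((Ar.t x y z).tens (Ar.id (.rel z u))).comp
          (Ar.bto (.rel x y) (.rel y z) (.rel z u))))

/-- Primitive non-identity arrow terms. -/
inductive Prim {V : Type} : ∀ {A B : Fm V}, Ar V A B → Prop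
  | bto (A B C : Fm V) : Prim (Ar.bto A B C)
  | bfrom (A B C : Fm V) : Prim (Ar.bfrom A B C)
  | dto (A : Fm V) : Prim (Ar.dto A)
  | dfrom (A : Fm V) : Prim (Ar.dfrom A)
  | sto (A : Fm V) : Prim (Ar.sto A)
  | sfrom (A : Fm V) : Prim (Ar.sfrom A)
  | r (x : V) : Prim (Ar.r x)
  | t (x y z : V) : Prim (Ar.t x y z)

/-- 1-terms: identities padded by identities. -/
inductive OneTerm {V : Type} : ∀ {A B : Fm V}, Ar V A B → Prop
  | id (A : Fm V) : OneTerm (Ar.id A)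
  | tensl (A : Fm V) {B C : Fm V} {f : Ar V B C} : OneTerm f → OneTerm ((Ar.id A).tens f)
  | tensr (A : Fm V) {B C : Fm V} {f : Ar V B C} : OneTerm f → OneTerm (f.tens (Ar.id A))

/-- Headed arrow terms: β-terms for some primitive non-identity β. -/
inductive Headed {V : Type} : ∀ {A B : Fm V}, Ar V A B → Prop
  | prim {A B : Fm V} {f : Ar V A B} : Prim f → Headed f
  | tensl (A : Fm V) {B C : Fm V} {f : Ar V B C} : Headed f → Headed ((Ar.id A).tens f)
  | tensr (A : Fm V) {B C : Fm V} {f : Ar V B C} : Headed f → Headed (f.tens (Ar.id A))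

/-- Factorized arrow terms all of whose factors are headed. -/
inductive HeadedSeq {V : Type} : ∀ {A B : Fm V}, Ar V A B → Prop
  | single {A B : Fm V} {f : Ar V A B} : Headed f → HeadedSeq f
  | comp {A B C : Fm V} {g : Ar V B C} {f : Ar V A B} :
      HeadedSeq g → HeadedSeq f → HeadedSeq (g.comp f)

/-- Developed arrow terms: f_n ∘ … ∘ f_1 with f_1 a 1-term and all other
factors headed. -/
inductive Developed {V : Type} : ∀ {A B : Fm V}, Ar V A B → Prop
  | one {A B : Fm V} {f : Ar V A B} : OneTerm f → Developed f
  | comp {A B C : Fm V} {g : Ar V B C} {f : Ar V A B} :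
      HeadedSeq g → Developed f → Developed (g.comp f)

/-- An arrow term is r-less when no `r` occurs in it. -/
def rLess {V : Type} : ∀ {A B : Fm V}, Ar V A B → Prop
  | _, _, .r _ => False
  | _, _, .comp g f => rLess g ∧ rLess f
  | _, _, .tens f g => rLess f ∧ rLess g
  | _, _, _ => True

/-- r-terms: `r x` padded by identities. -/
inductive RTerm {V : Type} : ∀ {A B : Fm V}, Ar V A B → Prop
  | r (x : V) : RTerm (Ar.r x)
  | tensl (A : Fm V) {B C : Fm V} {f : Ar V B C} : RTerm f → RTerm ((Ar.id A).tens f)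
  | tensr (A : Fm V) {B C : Fm V} {f : Ar V B C} : RTerm f → RTerm (f.tens (Ar.id A))

/-- r-factorized arrow terms: headed factorized arrow terms each of whose
factors is an r-term or a 1-term. -/
inductive RFact {V : Type} : ∀ {A B : Fm V}, Ar V A B → Prop
  | rterm {A B : Fm V} {f : Ar V A B} : RTerm f → RFact f
  | one {A B : Fm V} {f : Ar V A B} : OneTerm f → RFact f
  | comp {A B C : Fm V} {g : Ar V B C} {f : Ar V A B} : RFact g → RFact f → RFact (g.comp f)

/-! ### Auxiliary development for the r-Normality Lemma -/

local infix:50 " ≋ " => Eqv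

instance {V : Type} {A B : Fm V} : Trans (@Eqv V A B) (@Eqv V A B) (@Eqv V A B) :=
  ⟨Eqv.trans⟩

/-- Number of occurrences of primitive non-identity arrow terms. -/
def size {V : Type} : ∀ {A B : Fm V}, Ar V A B → Nat
  | _, _, .id _ => 0
  | _, _, .comp g f => size g + size f
  | _, _, .tens f g => size f + size g
  | _, _, .bto _ _ _ => 1
  | _, _, .bfrom _ _ _ => 1
  | _, _, .dto _ => 1
  | _, _, .dfrom _ => 1
  | _, _, .sto _ => 1
  | _, _, .sfrom _ => 1
  | _, _, .r _ => 1
  | _, _, .t _ _ _ => 1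

lemma size_zero {V : Type} {A B : Fm V} (g : Ar V A B) (h : size g = 0) :
    ∃ e : A = B, Eqv g (e ▸ Ar.id A) := by
  induction g with
  | id A => exact ⟨rfl, .refl _⟩
  | comp gg ff ihg ihf =>
      simp only [size] at h
      obtain ⟨e1, h1⟩ := ihf (by omega)
      obtain ⟨e2, h2⟩ := ihg (by omega)
      subst e1; subst e2
      exact ⟨rfl, Eqv.trans (Eqv.congr_comp h2 h1) (Eqv.id_comp _)⟩
  | tens ff gg ihf ihg =>
      simp only [size] at h
      obtain ⟨e1, h1⟩ := ihf (by omega)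
      obtain ⟨e2, h2⟩ := ihg (by omega)
      subst e1; subst e2
      exact ⟨rfl, Eqv.trans (Eqv.congr_tens h1 h2) (Eqv.tens_id _ _)⟩
  | bto A B C => simp [size] at h
  | bfrom A B C => simp [size] at h
  | dto A => simp [size] at h
  | dfrom A => simp [size] at h
  | sto A => simp [size] at h
  | sfrom A => simp [size] at h
  | r x => simp [size] at h
  | t x y z => simp [size] at h

lemma oneTerm_size {V : Type} {A B : Fm V} {f : Ar V A B} (h : OneTerm f) : size f = 0 := by
  induction h with
  | id A => rfl
  | tensl A h ih => simp [size, ih]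
  | tensr A h ih => simp [size, ih]

lemma oneTerm_rLess {V : Type} {A B : Fm V} {f : Ar V A B} (h : OneTerm f) : rLess f := by
  induction h with
  | id A => trivial
  | tensl A h ih => exact ⟨trivial, ih⟩
  | tensr A h ih => exact ⟨ih, trivial⟩

/-- Naturality of `dfrom`, derived from naturality of `dto`. -/
lemma dfrom_nat {V : Type} {A D : Fm V} (f : Ar V A D) :
    Eqv ((Ar.dfrom D).comp f) ((f.tens (Ar.id .top)).comp (Ar.dfrom A)) := by
  have h1 : Eqv f (f.comp ((Ar.dto A).comp (Ar.dfrom A))) :=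
    ((Eqv.congr_comp (.refl f) (Eqv.dd2 A)).trans (Eqv.comp_id f)).symm
  calc (Ar.dfrom D).comp f
      ≋ (Ar.dfrom D).comp (f.comp ((Ar.dto A).comp (Ar.dfrom A))) :=
        Eqv.congr_comp (.refl _) h1
    _ ≋ (Ar.dfrom D).comp ((f.comp (Ar.dto A)).comp (Ar.dfrom A)) :=
        Eqv.congr_comp (.refl _) (Eqv.comp_assoc _ _ _).symm
    _ ≋ ((Ar.dfrom D).comp (f.comp (Ar.dto A))).comp (Ar.dfrom A) :=
        (Eqv.comp_assoc _ _ _).symm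
    _ ≋ ((Ar.dfrom D).comp ((Ar.dto D).comp (f.tens (Ar.id .top)))).comp (Ar.dfrom A) :=
        Eqv.congr_comp (Eqv.congr_comp (.refl _) (Eqv.nat_d f)) (.refl _)
    _ ≋ (((Ar.dfrom D).comp (Ar.dto D)).comp (f.tens (Ar.id .top))).comp (Ar.dfrom A) :=
        Eqv.congr_comp (Eqv.comp_assoc _ _ _).symm (.refl _)
    _ ≋ ((Ar.id _).comp (f.tens (Ar.id .top))).comp (Ar.dfrom A) :=
        Eqv.congr_comp (Eqv.congr_comp (Eqv.dd1 D) (.refl _)) (.refl _)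
    _ ≋ (f.tens (Ar.id .top)).comp (Ar.dfrom A) :=
        Eqv.congr_comp (Eqv.id_comp _) (.refl _)

/-- Naturality of `sfrom`, derived from naturality of `sto`. -/
lemma sfrom_nat {V : Type} {A D : Fm V} (f : Ar V A D) :
    Eqv ((Ar.sfrom D).comp f) (((Ar.id .top).tens f).comp (Ar.sfrom A)) := by
  have h1 : Eqv f (f.comp ((Ar.sto A).comp (Ar.sfrom A))) :=
    ((Eqv.congr_comp (.refl f) (Eqv.ss2 A)).trans (Eqv.comp_id f)).symm
  calc (Ar.sfrom D).comp f
      ≋ (Ar.sfrom D).comp (f.comp ((Ar.sto A).comp (Ar.sfrom A))) :=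
        Eqv.congr_comp (.refl _) h1
    _ ≋ (Ar.sfrom D).comp ((f.comp (Ar.sto A)).comp (Ar.sfrom A)) :=
        Eqv.congr_comp (.refl _) (Eqv.comp_assoc _ _ _).symm
    _ ≋ ((Ar.sfrom D).comp (f.comp (Ar.sto A))).comp (Ar.sfrom A) :=
        (Eqv.comp_assoc _ _ _).symm
    _ ≋ ((Ar.sfrom D).comp ((Ar.sto D).comp ((Ar.id .top).tens f))).comp (Ar.sfrom A) :=
        Eqv.congr_comp (Eqv.congr_comp (.refl _) (Eqv.nat_s f)) (.refl _)
    _ ≋ (((Ar.sfrom D).comp (Ar.sto D)).comp ((Ar.id .top).tens f)).comp (Ar.sfrom A) :=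
        Eqv.congr_comp (Eqv.comp_assoc _ _ _).symm (.refl _)
    _ ≋ ((Ar.id _).comp ((Ar.id .top).tens f)).comp (Ar.sfrom A) :=
        Eqv.congr_comp (Eqv.congr_comp (Eqv.ss1 D) (.refl _)) (.refl _)
    _ ≋ ((Ar.id .top).tens f).comp (Ar.sfrom A) :=
        Eqv.congr_comp (Eqv.id_comp _) (.refl _)

/-- Naturality of `bfrom`, derived from naturality of `bto`. -/
lemma bfrom_nat {V : Type} {A B C D E F : Fm V} (f : Ar V A D) (g : Ar V B E) (h : Ar V C F) :
    Eqv ((Ar.bfrom D E F).comp ((f.tens g).tens h))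
      ((f.tens (g.tens h)).comp (Ar.bfrom A B C)) := by
  have h1 : Eqv ((f.tens g).tens h)
      (((f.tens g).tens h).comp ((Ar.bto A B C).comp (Ar.bfrom A B C))) :=
    ((Eqv.congr_comp (.refl _) (Eqv.bb2 A B C)).trans (Eqv.comp_id _)).symm
  calc (Ar.bfrom D E F).comp ((f.tens g).tens h)
      ≋ (Ar.bfrom D E F).comp
          (((f.tens g).tens h).comp ((Ar.bto A B C).comp (Ar.bfrom A B C))) :=
        Eqv.congr_comp (.refl _) h1
    _ ≋ (Ar.bfrom D E F).comp
          ((((f.tens g).tens h).comp (Ar.bto A B C)).comp (Ar.bfrom A B C)) :=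
        Eqv.congr_comp (.refl _) (Eqv.comp_assoc _ _ _).symm
    _ ≋ ((Ar.bfrom D E F).comp (((f.tens g).tens h).comp (Ar.bto A B C))).comp
          (Ar.bfrom A B C) := (Eqv.comp_assoc _ _ _).symm
    _ ≋ ((Ar.bfrom D E F).comp ((Ar.bto D E F).comp (f.tens (g.tens h)))).comp
          (Ar.bfrom A B C) :=
        Eqv.congr_comp (Eqv.congr_comp (.refl _) (Eqv.nat_b f g h)) (.refl _)
    _ ≋ (((Ar.bfrom D E F).comp (Ar.bto D E F)).comp (f.tens (g.tens h))).comp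
          (Ar.bfrom A B C) :=
        Eqv.congr_comp (Eqv.comp_assoc _ _ _).symm (.refl _)
    _ ≋ ((Ar.id _).comp (f.tens (g.tens h))).comp (Ar.bfrom A B C) :=
        Eqv.congr_comp (Eqv.congr_comp (Eqv.bb1 D E F) (.refl _)) (.refl _)
    _ ≋ (f.tens (g.tens h)).comp (Ar.bfrom A B C) :=
        Eqv.congr_comp (Eqv.id_comp _) (.refl _)

/-- Padding an r-factorized term on the left with an identity. -/
lemma rfact_padL {V : Type} {A B : Fm V} {f : Ar V A B} (h : RFact f) (E : Fm V) :
    ∃ g : Ar V (.and E A) (.and E B), RFact g ∧ Eqv ((Ar.id E).tens f) g := by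
  induction h with
  | rterm hr => exact ⟨_, .rterm (.tensl E hr), .refl _⟩
  | one ho => exact ⟨_, .one (.tensl E ho), .refl _⟩
  | comp ha hb iha ihb =>
      obtain ⟨ga, hga, ea⟩ := iha
      obtain ⟨gb, hgb, eb⟩ := ihb
      refine ⟨ga.comp gb, .comp hga hgb, ?_⟩
      calc (Ar.id E).tens (Ar.comp _ _)
          ≋ ((Ar.id E).comp (Ar.id E)).tens (Ar.comp _ _) :=
            Eqv.congr_tens (Eqv.id_comp _).symm (.refl _)
        _ ≋ ((Ar.id E).tens _).comp ((Ar.id E).tens _) := Eqv.tens_comp _ _ _ _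
        _ ≋ ga.comp gb := Eqv.congr_comp ea eb

/-- Padding an r-factorized term on the right with an identity. -/
lemma rfact_padR {V : Type} {A B : Fm V} {f : Ar V A B} (h : RFact f) (E : Fm V) :
    ∃ g : Ar V (.and A E) (.and B E), RFact g ∧ Eqv (f.tens (Ar.id E)) g := by
  induction h with
  | rterm hr => exact ⟨_, .rterm (.tensr E hr), .refl _⟩
  | one ho => exact ⟨_, .one (.tensr E ho), .refl _⟩
  | comp ha hb iha ihb =>
      obtain ⟨ga, hga, ea⟩ := iha
      obtain ⟨gb, hgb, eb⟩ := ihb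
      refine ⟨ga.comp gb, .comp hga hgb, ?_⟩
      calc (Ar.comp _ _).tens (Ar.id E)
          ≋ (Ar.comp _ _).tens ((Ar.id E).comp (Ar.id E)) :=
            Eqv.congr_tens (.refl _) (Eqv.id_comp _).symm
        _ ≋ (Ar.tens _ (Ar.id E)).comp (Ar.tens _ (Ar.id E)) := Eqv.tens_comp _ _ _ _
        _ ≋ ga.comp gb := Eqv.congr_comp ea eb

/-- Padding a headed sequence on the right with an identity. -/
lemma hs_padR {V : Type} {A B : Fm V} {f : Ar V A B} (h : HeadedSeq f) (E : Fm V) :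
    ∃ g : Ar V (.and A E) (.and B E),
      HeadedSeq g ∧ Eqv (f.tens (Ar.id E)) g ∧ (rLess f → rLess g) := by
  induction h with
  | single hd => exact ⟨_, .single (.tensr E hd), .refl _, fun hr => ⟨hr, trivial⟩⟩
  | comp ha hb iha ihb =>
      obtain ⟨ga, hga, ea, ra⟩ := iha
      obtain ⟨gb, hgb, eb, rb⟩ := ihb
      refine ⟨ga.comp gb, .comp hga hgb, ?_, fun hr => ⟨ra hr.1, rb hr.2⟩⟩
      calc (Ar.comp _ _).tens (Ar.id E)
          ≋ (Ar.comp _ _).tens ((Ar.id E).comp (Ar.id E)) :=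
            Eqv.congr_tens (.refl _) (Eqv.id_comp _).symm
        _ ≋ (Ar.tens _ (Ar.id E)).comp (Ar.tens _ (Ar.id E)) := Eqv.tens_comp _ _ _ _
        _ ≋ ga.comp gb := Eqv.congr_comp ea eb

/-- Padding a headed sequence on the left with an identity. -/
lemma hs_padL {V : Type} {A B : Fm V} {f : Ar V A B} (h : HeadedSeq f) (E : Fm V) :
    ∃ g : Ar V (.and E A) (.and E B),
      HeadedSeq g ∧ Eqv ((Ar.id E).tens f) g ∧ (rLess f → rLess g) := by
  induction h with
  | single hd => exact ⟨_, .single (.tensl E hd), .refl _, fun hr => ⟨trivial, hr⟩⟩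
  | comp ha hb iha ihb =>
      obtain ⟨ga, hga, ea, ra⟩ := iha
      obtain ⟨gb, hgb, eb, rb⟩ := ihb
      refine ⟨ga.comp gb, .comp hga hgb, ?_, fun hr => ⟨ra hr.1, rb hr.2⟩⟩
      calc (Ar.id E).tens (Ar.comp _ _)
          ≋ ((Ar.id E).comp (Ar.id E)).tens (Ar.comp _ _) :=
            Eqv.congr_tens (Eqv.id_comp _).symm (.refl _)
        _ ≋ ((Ar.id E).tens _).comp ((Ar.id E).tens _) := Eqv.tens_comp _ _ _ _
        _ ≋ ga.comp gb := Eqv.congr_comp ea eb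

/-- Padding a developed term on the right with an identity. -/
lemma dev_padR {V : Type} {A B : Fm V} {f : Ar V A B} (h : Developed f) (E : Fm V) :
    ∃ g : Ar V (.and A E) (.and B E),
      Developed g ∧ Eqv (f.tens (Ar.id E)) g ∧ (rLess f → rLess g) := by
  induction h with
  | one ho => exact ⟨_, .one (.tensr E ho), .refl _, fun hr => ⟨hr, trivial⟩⟩
  | comp hs hd ihd =>
      obtain ⟨ga, hga, ea, ra⟩ := hs_padR hs E
      obtain ⟨gb, hgb, eb, rb⟩ := ihd
      refine ⟨ga.comp gb, .comp hga hgb, ?_, fun hr => ⟨ra hr.1, rb hr.2⟩⟩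
      calc (Ar.comp _ _).tens (Ar.id E)
          ≋ (Ar.comp _ _).tens ((Ar.id E).comp (Ar.id E)) :=
            Eqv.congr_tens (.refl _) (Eqv.id_comp _).symm
        _ ≋ (Ar.tens _ (Ar.id E)).comp (Ar.tens _ (Ar.id E)) := Eqv.tens_comp _ _ _ _
        _ ≋ ga.comp gb := Eqv.congr_comp ea eb

/-- Padding a developed term on the left with an identity. -/
lemma dev_padL {V : Type} {A B : Fm V} {f : Ar V A B} (h : Developed f) (E : Fm V) :
    ∃ g : Ar V (.and E A) (.and E B),
      Developed g ∧ Eqv ((Ar.id E).tens f) g ∧ (rLess f → rLess g) := by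
  induction h with
  | one ho => exact ⟨_, .one (.tensl E ho), .refl _, fun hr => ⟨trivial, hr⟩⟩
  | comp hs hd ihd =>
      obtain ⟨ga, hga, ea, ra⟩ := hs_padL hs E
      obtain ⟨gb, hgb, eb, rb⟩ := ihd
      refine ⟨ga.comp gb, .comp hga hgb, ?_, fun hr => ⟨ra hr.1, rb hr.2⟩⟩
      calc (Ar.id E).tens (Ar.comp _ _)
          ≋ ((Ar.id E).comp (Ar.id E)).tens (Ar.comp _ _) :=
            Eqv.congr_tens (Eqv.id_comp _).symm (.refl _)
        _ ≋ ((Ar.id E).tens _).comp ((Ar.id E).tens _) := Eqv.tens_comp _ _ _ _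
        _ ≋ ga.comp gb := Eqv.congr_comp ea eb

/-- Composing developed terms up to `Eqv`. -/
lemma dev_comp {V : Type} : ∀ {B C : Fm V} {g : Ar V B C}, Developed g →
    ∀ {A : Fm V} {f : Ar V A B}, Developed f → rLess g → rLess f →
    ∃ h : Ar V A C, Developed h ∧ rLess h ∧ Eqv (g.comp f) h := by
  intro B C g hg
  induction hg with
  | one ho =>
      intro A f hf hrg hrf
      obtain ⟨e, he⟩ := size_zero _ (oneTerm_size ho)
      subst e
      exact ⟨f, hf, hrf, (Eqv.congr_comp he (.refl f)).trans (Eqv.id_comp f)⟩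
  | comp hs hd ih =>
      intro A f hf hrg hrf
      obtain ⟨h0, dh0, rh0, eh0⟩ := ih hf hrg.2 hrf
      exact ⟨_, .comp hs dh0, ⟨hrg.1, rh0⟩,
        (Eqv.comp_assoc _ _ _).trans (Eqv.congr_comp (.refl _) eh0)⟩

/-- Every primitive has a developed form. -/
lemma dev_of_prim {V : Type} {A B : Fm V} {p : Ar V A B} (hp : Prim p) (hr : rLess p) :
    ∃ f' : Ar V A B, Developed f' ∧ rLess f' ∧ Eqv p f' :=
  ⟨p.comp (Ar.id A), .comp (.single (.prim hp)) (.one (.id A)), ⟨hr, trivial⟩,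
    (Eqv.comp_id p).symm⟩

/-- Development Lemma for r-less terms. -/
lemma develop {V : Type} : ∀ {A B : Fm V} (f : Ar V A B), rLess f →
    ∃ f' : Ar V A B, Developed f' ∧ rLess f' ∧ Eqv f f' := by
  intro A B f
  induction f with
  | id A => intro _; exact ⟨Ar.id A, .one (.id A), trivial, .refl _⟩
  | comp gg ff ihg ihf =>
      intro hr
      obtain ⟨g', dg, rg, eg⟩ := ihg hr.1
      obtain ⟨f', df, rf, ef⟩ := ihf hr.2
      obtain ⟨h, dh, rh, eh⟩ := dev_comp dg df rg rf
      exact ⟨h, dh, rh, (Eqv.congr_comp eg ef).trans eh⟩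
  | tens ff gg ihf ihg =>
      rename_i A1 B1 A2 B2
      intro hr
      obtain ⟨f', df, rf, ef⟩ := ihf hr.1
      obtain ⟨g', dg, rg, eg⟩ := ihg hr.2
      obtain ⟨h1, dh1, e1, r1⟩ := dev_padR df B2
      obtain ⟨h2, dh2, e2, r2⟩ := dev_padL dg A1
      obtain ⟨h, dh, rh, eh⟩ := dev_comp dh1 dh2 (r1 rf) (r2 rg)
      refine ⟨h, dh, rh, ?_⟩
      calc ff.tens gg ≋ f'.tens g' := Eqv.congr_tens ef eg
        _ ≋ (f'.comp (Ar.id A1)).tens ((Ar.id B2).comp g') :=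
            Eqv.congr_tens (Eqv.comp_id _).symm (Eqv.id_comp _).symm
        _ ≋ (f'.tens (Ar.id B2)).comp ((Ar.id A1).tens g') := Eqv.tens_comp _ _ _ _
        _ ≋ h1.comp h2 := Eqv.congr_comp e1 e2
        _ ≋ h := eh
  | bto A B C => intro _; exact dev_of_prim (.bto A B C) trivial
  | bfrom A B C => intro _; exact dev_of_prim (.bfrom A B C) trivial
  | dto A => intro _; exact dev_of_prim (.dto A) trivial
  | dfrom A => intro _; exact dev_of_prim (.dfrom A) trivial
  | sto A => intro _; exact dev_of_prim (.sto A) trivial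
  | sfrom A => intro _; exact dev_of_prim (.sfrom A) trivial
  | r x => intro hr; exact hr.elim
  | t x y z => intro _; exact dev_of_prim (.t x y z) trivial

/-- Pushing an r-term past an r-less term (statement, bounded by size). -/
def PushP1 (V : Type) (n : Nat) : Prop :=
  ∀ {B E : Fm V} (g : Ar V B E), size g ≤ n → rLess g →
  ∀ {D : Fm V} (ρ : Ar V D B), RTerm ρ →
  ∃ (M : Fm V) (g2 : Ar V D M) (fr2 : Ar V M E),
    size g2 ≤ size g ∧ rLess g2 ∧ RFact fr2 ∧ Eqv (g.comp ρ) (fr2.comp g2)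

/-- Pushing an r-factorized term past an r-less term (statement, bounded by size). -/
def PushP2 (V : Type) (n : Nat) : Prop :=
  ∀ {B E : Fm V} (g : Ar V B E), size g ≤ n → rLess g →
  ∀ {D : Fm V} (fr : Ar V D B), RFact fr →
  ∃ (M : Fm V) (g2 : Ar V D M) (fr2 : Ar V M E),
    size g2 ≤ size g ∧ rLess g2 ∧ RFact fr2 ∧ Eqv (g.comp fr) (fr2.comp g2)

lemma pushP1 {V : Type} (n : Nat) (IH : ∀ m, m < n → PushP2 V m) : PushP1 V n := by
  intro B E g
  induction g with
  | id A =>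
      intro _ _ D ρ hρ
      exact ⟨D, Ar.id D, ρ, Nat.le_refl _, trivial, .rterm hρ,
        (Eqv.id_comp ρ).trans (Eqv.comp_id ρ).symm⟩
  | comp gout gin ihout ihin =>
      intro hsz hrl D ρ hρ
      have hs : size gout + size gin ≤ n := by simpa [size] using hsz
      obtain ⟨hrout, hrin⟩ := hrl
      rcases Nat.eq_zero_or_pos (size gin) with h0 | hpos
      · obtain ⟨e, he⟩ := size_zero gin h0
        subst e
        obtain ⟨M2, g2, fr2, hs2, hr2, hf2, heq⟩ := ihout (by omega) hrout ρ hρ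
        refine ⟨M2, g2, fr2, by simp only [size]; omega, hr2, hf2, ?_⟩
        calc (gout.comp gin).comp ρ ≋ gout.comp (gin.comp ρ) := Eqv.comp_assoc _ _ _
          _ ≋ gout.comp ((Ar.id _).comp ρ) :=
              Eqv.congr_comp (.refl _) (Eqv.congr_comp he (.refl _))
          _ ≋ gout.comp ρ := Eqv.congr_comp (.refl _) (Eqv.id_comp ρ)
          _ ≋ fr2.comp g2 := heq
      · rcases Nat.eq_zero_or_pos (size gout) with h0' | hpos'
        · obtain ⟨e, he⟩ := size_zero gout h0'
          subst e
          obtain ⟨M2, g2, fr2, hs2, hr2, hf2, heq⟩ := ihin (by omega) hrin ρ hρ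
          refine ⟨M2, g2, fr2, by simp only [size]; omega, hr2, hf2, ?_⟩
          calc (gout.comp gin).comp ρ ≋ gout.comp (gin.comp ρ) := Eqv.comp_assoc _ _ _
            _ ≋ (Ar.id _).comp (gin.comp ρ) := Eqv.congr_comp he (.refl _)
            _ ≋ gin.comp ρ := Eqv.id_comp _
            _ ≋ fr2.comp g2 := heq
        · obtain ⟨M1, ga, fra, hsa, hra, hfa, heqa⟩ := ihin (by omega) hrin ρ hρ
          obtain ⟨M2, gb, frb, hsb, hrb, hfb, heqb⟩ :=
            IH (size gout) (by omega) gout (Nat.le_refl _) hrout fra hfa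
          refine ⟨M2, gb.comp ga, frb, by simp only [size]; omega, ⟨hrb, hra⟩, hfb, ?_⟩
          calc (gout.comp gin).comp ρ ≋ gout.comp (gin.comp ρ) := Eqv.comp_assoc _ _ _
            _ ≋ gout.comp (fra.comp ga) := Eqv.congr_comp (.refl _) heqa
            _ ≋ (gout.comp fra).comp ga := (Eqv.comp_assoc _ _ _).symm
            _ ≋ (frb.comp gb).comp ga := Eqv.congr_comp heqb (.refl _)
            _ ≋ frb.comp (gb.comp ga) := Eqv.comp_assoc _ _ _
  | tens gl gr ihl ihr =>
      rename_i A1 B1 A2 B2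
      intro hsz hrl D ρ hρ
      have hs : size gl + size gr ≤ n := by simpa [size] using hsz
      obtain ⟨hrll, hrlr⟩ := hrl
      cases hρ with
      | tensl X hρ' =>
          rename_i D2 ρ'
          obtain ⟨M1, ga, fra, hsa, hra, hfa, heqa⟩ := ihr (by omega) hrlr ρ' hρ'
          obtain ⟨fr2, hf2, he2⟩ := rfact_padL hfa B1
          refine ⟨_, gl.tens ga, fr2, by simp only [size]; omega, ⟨hrll, hra⟩, hf2, ?_⟩
          calc (gl.tens gr).comp ((Ar.id A1).tens ρ')
              ≋ (gl.comp (Ar.id A1)).tens (gr.comp ρ') := (Eqv.tens_comp _ _ _ _).symm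
            _ ≋ ((Ar.id B1).comp gl).tens (fra.comp ga) :=
                Eqv.congr_tens ((Eqv.comp_id gl).trans (Eqv.id_comp gl).symm) heqa
            _ ≋ ((Ar.id B1).tens fra).comp (gl.tens ga) := Eqv.tens_comp _ _ _ _
            _ ≋ fr2.comp (gl.tens ga) := Eqv.congr_comp he2 (.refl _)
      | tensr X hρ' =>
          rename_i D2 ρ'
          obtain ⟨M1, ga, fra, hsa, hra, hfa, heqa⟩ := ihl (by omega) hrll ρ' hρ'
          obtain ⟨fr2, hf2, he2⟩ := rfact_padR hfa B2
          refine ⟨_, ga.tens gr, fr2, by simp only [size]; omega, ⟨hra, hrlr⟩, hf2, ?_⟩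
          calc (gl.tens gr).comp (ρ'.tens (Ar.id A2))
              ≋ (gl.comp ρ').tens (gr.comp (Ar.id A2)) := (Eqv.tens_comp _ _ _ _).symm
            _ ≋ (fra.comp ga).tens ((Ar.id B2).comp gr) :=
                Eqv.congr_tens heqa ((Eqv.comp_id gr).trans (Eqv.id_comp gr).symm)
            _ ≋ (fra.tens (Ar.id B2)).comp (ga.tens gr) := Eqv.tens_comp _ _ _ _
            _ ≋ fr2.comp (ga.tens gr) := Eqv.congr_comp he2 (.refl _)
  | bto A1 B1 C1 =>
      intro _ _ D ρ hρ
      cases hρ with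
      | tensl X hρ' =>
          rename_i D2 ρ'
          cases hρ' with
          | tensl Y hρ3 =>
              rename_i D3 ρ3
              refine ⟨_, Ar.bto A1 B1 _, (Ar.id (.and A1 B1)).tens ρ3,
                by simp [size], trivial, .rterm (.tensl _ hρ3), ?_⟩
              calc (Ar.bto A1 B1 C1).comp ((Ar.id A1).tens ((Ar.id B1).tens ρ3))
                  ≋ (((Ar.id A1).tens (Ar.id B1)).tens ρ3).comp (Ar.bto A1 B1 _) :=
                    (Eqv.nat_b _ _ _).symm
                _ ≋ ((Ar.id (.and A1 B1)).tens ρ3).comp (Ar.bto A1 B1 _) :=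
                    Eqv.congr_comp (Eqv.congr_tens (Eqv.tens_id _ _) (.refl _)) (.refl _)
          | tensr Y hρ3 =>
              rename_i D3 ρ3
              exact ⟨_, Ar.bto A1 _ C1, ((Ar.id A1).tens ρ3).tens (Ar.id C1),
                by simp [size], trivial, .rterm (.tensr _ (.tensl _ hρ3)),
                (Eqv.nat_b _ _ _).symm⟩
      | tensr X hρ' =>
          rename_i D2 ρ'
          refine ⟨_, Ar.bto _ B1 C1, (ρ'.tens (Ar.id B1)).tens (Ar.id C1),
            by simp [size], trivial, .rterm (.tensr _ (.tensr _ hρ')), ?_⟩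
          calc (Ar.bto A1 B1 C1).comp (ρ'.tens (Ar.id (.and B1 C1)))
              ≋ (Ar.bto A1 B1 C1).comp (ρ'.tens ((Ar.id B1).tens (Ar.id C1))) :=
                Eqv.congr_comp (.refl _) (Eqv.congr_tens (.refl _) (Eqv.tens_id _ _).symm)
            _ ≋ ((ρ'.tens (Ar.id B1)).tens (Ar.id C1)).comp (Ar.bto _ B1 C1) :=
                (Eqv.nat_b _ _ _).symm
  | bfrom A1 B1 C1 =>
      intro _ _ D ρ hρ
      cases hρ with
      | tensl X hρ3 =>
          rename_i D2 ρ3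
          refine ⟨_, Ar.bfrom A1 B1 _, (Ar.id A1).tens ((Ar.id B1).tens ρ3),
            by simp [size], trivial, .rterm (.tensl _ (.tensl _ hρ3)), ?_⟩
          calc (Ar.bfrom A1 B1 C1).comp ((Ar.id (.and A1 B1)).tens ρ3)
              ≋ (Ar.bfrom A1 B1 C1).comp (((Ar.id A1).tens (Ar.id B1)).tens ρ3) :=
                Eqv.congr_comp (.refl _) (Eqv.congr_tens (Eqv.tens_id _ _).symm (.refl _))
            _ ≋ ((Ar.id A1).tens ((Ar.id B1).tens ρ3)).comp (Ar.bfrom A1 B1 _) :=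
                bfrom_nat _ _ _
      | tensr X hρ' =>
          rename_i D2 ρ'
          cases hρ' with
          | tensl Y hρ3 =>
              rename_i D3 ρ3
              exact ⟨_, Ar.bfrom A1 _ C1, (Ar.id A1).tens (ρ3.tens (Ar.id C1)),
                by simp [size], trivial, .rterm (.tensl _ (.tensr _ hρ3)),
                bfrom_nat _ _ _⟩
          | tensr Y hρ3 =>
              rename_i D3 ρ3
              refine ⟨_, Ar.bfrom _ B1 C1, ρ3.tens (Ar.id (.and B1 C1)),
                by simp [size], trivial, .rterm (.tensr _ hρ3), ?_⟩
              calc (Ar.bfrom A1 B1 C1).comp ((ρ3.tens (Ar.id B1)).tens (Ar.id C1))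
                  ≋ (ρ3.tens ((Ar.id B1).tens (Ar.id C1))).comp (Ar.bfrom _ B1 C1) :=
                    bfrom_nat _ _ _
                _ ≋ (ρ3.tens (Ar.id (.and B1 C1))).comp (Ar.bfrom _ B1 C1) :=
                    Eqv.congr_comp (Eqv.congr_tens (.refl _) (Eqv.tens_id _ _)) (.refl _)
  | dto A1 =>
      intro _ _ D ρ hρ
      cases hρ with
      | tensl X hρ' =>
          cases hρ'
      | tensr X hρ' =>
          rename_i D2 ρ'
          exact ⟨_, Ar.dto _, ρ', by simp [size], trivial, .rterm hρ',
            (Eqv.nat_d ρ').symm⟩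
  | sto A1 =>
      intro _ _ D ρ hρ
      cases hρ with
      | tensl X hρ' =>
          rename_i D2 ρ'
          exact ⟨_, Ar.sto _, ρ', by simp [size], trivial, .rterm hρ',
            (Eqv.nat_s ρ').symm⟩
      | tensr X hρ' =>
          cases hρ'
  | dfrom A1 =>
      intro _ _ D ρ hρ
      exact ⟨_, Ar.dfrom D, ρ.tens (Ar.id .top), by simp [size], trivial,
        .rterm (.tensr _ hρ), dfrom_nat ρ⟩
  | sfrom A1 =>
      intro _ _ D ρ hρ
      exact ⟨_, Ar.sfrom D, (Ar.id .top).tens ρ, by simp [size], trivial,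
        .rterm (.tensl _ hρ), sfrom_nat ρ⟩
  | r x =>
      intro _ hrl D ρ hρ
      exact hrl.elim
  | t x y z =>
      intro _ _ D ρ hρ
      cases hρ with
      | tensl X hρ' =>
          rename_i D2 ρ'
          cases hρ' with
          | r =>
              exact ⟨_, Ar.dto (.rel x y), Ar.id (.rel x y), by simp [size], trivial,
                .one (.id _), (Eqv.rtd x y).trans (Eqv.id_comp _).symm⟩
      | tensr X hρ' =>
          rename_i D2 ρ'
          cases hρ' with
          | r =>
              exact ⟨_, Ar.sto (.rel x z), Ar.id (.rel x z), by simp [size], trivial,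
                .one (.id _), (Eqv.rts z x).trans (Eqv.id_comp _).symm⟩

lemma p2_aux {V : Type} (n : Nat) (h1 : PushP1 V n) {D B : Fm V}
    (fr : Ar V D B) (hfr : RFact fr) :
    ∀ {E : Fm V} (g : Ar V B E), size g ≤ n → rLess g →
    ∃ (M : Fm V) (g2 : Ar V D M) (fr2 : Ar V M E),
      size g2 ≤ size g ∧ rLess g2 ∧ RFact fr2 ∧ Eqv (g.comp fr) (fr2.comp g2) := by
  induction hfr with
  | rterm hr =>
      intro E g hsz hrl
      exact h1 g hsz hrl _ hr
  | one ho =>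
      rename_i u
      intro E g hsz hrl
      exact ⟨_, g.comp u, Ar.id E, by simp [size, oneTerm_size ho],
        ⟨hrl, oneTerm_rLess ho⟩, .one (.id E), (Eqv.id_comp _).symm⟩
  | comp ha hb iha ihb =>
      intro E g hsz hrl
      obtain ⟨M1, g2, fr2, hs2, hr2, hf2, he2⟩ := iha g hsz hrl
      obtain ⟨M2, g3, fr3, hs3, hr3, hf3, he3⟩ := ihb g2 (Nat.le_trans hs2 hsz) hr2
      refine ⟨M2, g3, fr2.comp fr3, Nat.le_trans hs3 hs2, hr3, .comp hf2 hf3, ?_⟩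
      calc g.comp (Ar.comp _ _) ≋ (g.comp _).comp _ := (Eqv.comp_assoc _ _ _).symm
        _ ≋ (fr2.comp g2).comp _ := Eqv.congr_comp he2 (.refl _)
        _ ≋ fr2.comp (g2.comp _) := Eqv.comp_assoc _ _ _
        _ ≋ fr2.comp (fr3.comp g3) := Eqv.congr_comp (.refl _) he3
        _ ≋ (fr2.comp fr3).comp g3 := (Eqv.comp_assoc _ _ _).symm

lemma push {V : Type} : ∀ n, PushP2 V n := by
  intro n
  induction n using Nat.strong_induction_on with
  | _ n ih =>
      intro B E g hsz hrl D fr hfr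
      exact p2_aux n (pushP1 n ih) fr hfr g hsz hrl

/-- The statement of the r-Normality Lemma, as a predicate. -/
def Decomp {V : Type} {A B : Fm V} (f : Ar V A B) : Prop :=
  ∃ (C : Fm V) (f' : Ar V A C) (fr : Ar V C B),
    Developed f' ∧ rLess f' ∧ RFact fr ∧ Eqv f (fr.comp f')

lemma decomp_of_prim {V : Type} {A B : Fm V} {p : Ar V A B} (hp : Prim p) (hr : rLess p) :
    Decomp p :=
  ⟨B, p.comp (Ar.id A), Ar.id B, .comp (.single (.prim hp)) (.one (.id A)),
    ⟨hr, trivial⟩, .one (.id B), ((Eqv.id_comp _).trans (Eqv.comp_id _)).symm⟩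

lemma decomp_comp {V : Type} {A B C : Fm V} {g : Ar V B C} {f : Ar V A B}
    (hg : Decomp g) (hf : Decomp f) : Decomp (g.comp f) := by
  obtain ⟨Cf, f', frf, df, rf, Rf, ef⟩ := hf
  obtain ⟨Cg, g', frg, dg, rg, Rg, eg⟩ := hg
  obtain ⟨M, g2, fr2, _, hr2, hf2, he2⟩ := push (size g') g' (Nat.le_refl _) rg frf Rf
  obtain ⟨g2', dg2, rg2, he⟩ := develop g2 hr2
  obtain ⟨h, dh, rh, heh⟩ := dev_comp dg2 df rg2 rf
  refine ⟨M, h, frg.comp fr2, dh, rh, .comp Rg hf2, ?_⟩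
  calc g.comp f ≋ (frg.comp g').comp (frf.comp f') := Eqv.congr_comp eg ef
    _ ≋ frg.comp (g'.comp (frf.comp f')) := Eqv.comp_assoc _ _ _
    _ ≋ frg.comp ((g'.comp frf).comp f') :=
        Eqv.congr_comp (.refl _) (Eqv.comp_assoc _ _ _).symm
    _ ≋ frg.comp ((fr2.comp g2).comp f') :=
        Eqv.congr_comp (.refl _) (Eqv.congr_comp he2 (.refl _))
    _ ≋ frg.comp (fr2.comp (g2.comp f')) :=
        Eqv.congr_comp (.refl _) (Eqv.comp_assoc _ _ _)
    _ ≋ (frg.comp fr2).comp (g2.comp f') := (Eqv.comp_assoc _ _ _).symm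
    _ ≋ (frg.comp fr2).comp (g2'.comp f') :=
        Eqv.congr_comp (.refl _) (Eqv.congr_comp he (.refl _))
    _ ≋ (frg.comp fr2).comp h := Eqv.congr_comp (.refl _) heh

lemma decomp_tens {V : Type} {A B C D : Fm V} {f : Ar V A B} {g : Ar V C D}
    (hf : Decomp f) (hg : Decomp g) : Decomp (f.tens g) := by
  obtain ⟨Cf, f', frf, df, rf, Rf, ef⟩ := hf
  obtain ⟨Cg, g', frg, dg, rg, Rg, eg⟩ := hg
  obtain ⟨h1, dh1, e1, r1⟩ := dev_padR df Cg
  obtain ⟨h2, dh2, e2, r2⟩ := dev_padL dg A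
  obtain ⟨h, dh, rh, eh⟩ := dev_comp dh1 dh2 (r1 rf) (r2 rg)
  obtain ⟨fra, hfa, ea⟩ := rfact_padR Rf D
  obtain ⟨frb, hfb, eb⟩ := rfact_padL Rg Cf
  refine ⟨_, h, fra.comp frb, dh, rh, .comp hfa hfb, ?_⟩
  calc f.tens g ≋ (frf.comp f').tens (frg.comp g') := Eqv.congr_tens ef eg
    _ ≋ (frf.tens frg).comp (f'.tens g') := Eqv.tens_comp _ _ _ _
    _ ≋ ((frf.comp (Ar.id Cf)).tens ((Ar.id D).comp frg)).comp (f'.tens g') :=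
        Eqv.congr_comp (Eqv.congr_tens (Eqv.comp_id _).symm (Eqv.id_comp _).symm) (.refl _)
    _ ≋ ((frf.tens (Ar.id D)).comp ((Ar.id Cf).tens frg)).comp (f'.tens g') :=
        Eqv.congr_comp (Eqv.tens_comp _ _ _ _) (.refl _)
    _ ≋ (fra.comp frb).comp (f'.tens g') := Eqv.congr_comp (Eqv.congr_comp ea eb) (.refl _)
    _ ≋ (fra.comp frb).comp ((f'.comp (Ar.id A)).tens ((Ar.id Cg).comp g')) :=
        Eqv.congr_comp (.refl _) (Eqv.congr_tens (Eqv.comp_id _).symm (Eqv.id_comp _).symm)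
    _ ≋ (fra.comp frb).comp ((f'.tens (Ar.id Cg)).comp ((Ar.id A).tens g')) :=
        Eqv.congr_comp (.refl _) (Eqv.tens_comp _ _ _ _)
    _ ≋ (fra.comp frb).comp (h1.comp h2) :=
        Eqv.congr_comp (.refl _) (Eqv.congr_comp e1 e2)
    _ ≋ (fra.comp frb).comp h := Eqv.congr_comp (.refl _) eh

/-- r-Normality Lemma. -/
theorem stmt3 {V : Type} {A B : Fm V} (f : Ar V A B) :
    ∃ (C : Fm V) (f' : Ar V A C) (fr : Ar V C B),
      Developed f' ∧ rLess f' ∧ RFact fr ∧ Eqv f (fr.comp f') := by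
  induction f with
  | id A => exact ⟨A, .id A, .id A, .one (.id A), trivial, .one (.id A),
      (Eqv.id_comp _).symm⟩
  | comp gg ff ihg ihf => exact decomp_comp ihg ihf
  | tens ff gg ihf ihg => exact decomp_tens ihf ihg
  | bto A B C => exact decomp_of_prim (.bto A B C) trivial
  | bfrom A B C => exact decomp_of_prim (.bfrom A B C) trivial
  | dto A => exact decomp_of_prim (.dto A) trivial
  | dfrom A => exact decomp_of_prim (.dfrom A) trivial
  | sto A => exact decomp_of_prim (.sto A) trivial
  | sfrom A => exact decomp_of_prim (.sfrom A) trivial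
  | r x => exact ⟨_, Ar.id _, Ar.r x, .one (.id _), trivial, .rterm (.r x),
      (Eqv.comp_id _).symm⟩
  | t x y z => exact decomp_of_prim (.t x y z) trivial

end DP
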